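/- For a fixed sum value k̃ > 0, the integral over λ ∈ (0,∞)^N with Σλᵢ = k̃ (with respect to the (N-1)-dimensional Lebesgue measure on this simplex slice) of ∏_{i<j}(λᵢ-λⱼ)² equals (k̃^{N²-1}/Γ(N²)) · ∏_{j=1}^N Γ(j+1)Γ(j)/Γ(2). -/

import Mathlib

/-!
Expanding the square of the Vandermonde determinant gives
`∏_{i<j} (λᵢ - λⱼ)² = ∑_{σ,τ} sgn σ sgn τ ∏ᵢ λᵢ^(σ i + τ i)`, so the integral is a signed sum
of Dirichlet integrals `∫ ∏ᵢ λᵢ^aᵢ = k̃^(n + ∑ a) ∏ᵢ aᵢ! / (n + ∑ a)!` over the slice; these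
follow by peeling off one coordinate at a time (Fubini) and a Beta integral. Every exponent
vector has the same sum `N(N-1)`, and the remaining signed sum is
`∑_{σ,τ} sgn σ sgn τ ∏ᵢ (σ i + τ i)! = N! det[(i+j)!]`. By Vandermonde's identity the Hankel
matrix `[(i+j)!]` factors as `D P Pᵀ D` with `D = diag(i!)` and `P = [C(i,j)]` unitriangular,
so its determinant is `(∏ᵢ i!)²`.
-/

open MeasureTheory Finset
open scoped Nat

theorem Nat.sum_range_choose_mul_choose {i j N : ℕ} (hj : j < N) :
    ∑ k ∈ range N, i.choose k * j.choose k = (i + j).choose j := by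
  rw [← sum_subset (range_subset_range.2 hj) fun k _ hk => by
      rw [Nat.choose_eq_zero_of_lt (n := j) (by simpa using hk), mul_zero],
    add_choose_eq, Nat.sum_antidiagonal_eq_sum_range_succ_mk]
  exact sum_congr rfl fun k hk => by rw [choose_symm (mem_range_succ_iff.1 hk)]

namespace Matrix

variable {R : Type*} [CommRing R]

theorem det_of_choose (N : ℕ) :
    (of fun i j : Fin N => ((i : ℕ).choose j : R)).det = 1 := by
  rw [det_of_isLowerTriangular _ fun i j hij => by
    simp [Nat.choose_eq_zero_of_lt (show (i : ℕ) < j from hij)]]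
  simp

theorem det_of_factorial_add (N : ℕ) :
    (of fun i j : Fin N => (((i : ℕ) + j)! : R)).det = (∏ i : Fin N, ((i : ℕ)! : R)) ^ 2 := by
  set P : Matrix (Fin N) (Fin N) R := of fun i j => ((i : ℕ).choose j : R)
  set D : Matrix (Fin N) (Fin N) R := diagonal fun i => ((i : ℕ)! : R)
  have hfactor : of (fun i j : Fin N => (((i : ℕ) + j)! : R)) = D * (P * Pᵀ) * D := by
    ext i j
    have hPP : (P * Pᵀ) i j = (((i : ℕ) + j).choose j : R) := by
      simp only [P, mul_apply, transpose_apply, of_apply]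
      rw [← Nat.sum_range_choose_mul_choose j.isLt, Nat.cast_sum,
        ← Fin.sum_univ_eq_sum_range
          (fun k => (((i : ℕ).choose k * (j : ℕ).choose k : ℕ) : R))]
      push_cast
      rfl
    rw [mul_diagonal, diagonal_mul, hPP, of_apply,
      ← Nat.add_choose_mul_factorial_mul_factorial (i : ℕ) j]
    push_cast
    ring
  rw [hfactor, det_mul, det_mul, det_mul, det_transpose, det_of_choose, det_diagonal]
  ring

theorem sum_sign_mul_sign_mul_prod {ι : Type*} [Fintype ι] [DecidableEq ι] (A : Matrix ι ι R) :
    ∑ σ : Equiv.Perm ι, ∑ τ : Equiv.Perm ι,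
        ((Equiv.Perm.sign σ : ℤ) : R) * ((Equiv.Perm.sign τ : ℤ) : R) * ∏ i, A (σ i) (τ i)
      = (Fintype.card ι)! * A.det := by
  have hinner : ∀ σ : Equiv.Perm ι, ∑ τ : Equiv.Perm ι,
      ((Equiv.Perm.sign σ : ℤ) : R) * ((Equiv.Perm.sign τ : ℤ) : R) * ∏ i, A (σ i) (τ i)
        = A.det := fun σ => by
    rw [← det_transpose, det_apply', ← Equiv.sum_comp (Equiv.mulRight σ)]
    refine sum_congr rfl fun ρ _ => ?_
    have hsign : ((Equiv.Perm.sign σ : ℤ) : R) * ((Equiv.Perm.sign (ρ * σ) : ℤ) : R)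
        = ((Equiv.Perm.sign ρ : ℤ) : R) := by
      have hσ : ((Equiv.Perm.sign σ : ℤ) : R) * ((Equiv.Perm.sign σ : ℤ) : R) = 1 := by
        rw [← Int.cast_mul, ← Units.val_mul, Int.units_mul_self, Units.val_one, Int.cast_one]
      rw [Equiv.Perm.sign_mul, Units.val_mul, Int.cast_mul]
      linear_combination ((Equiv.Perm.sign ρ : ℤ) : R) * hσ
    rw [Equiv.coe_mulRight, hsign]
    congr 1
    exact Equiv.prod_comp σ fun j => A j (ρ j)
  rw [sum_congr rfl fun σ _ => hinner σ, sum_const, card_univ, Fintype.card_perm, nsmul_eq_mul]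

theorem det_vandermonde_sq {n : ℕ} (v : Fin n → R) :
    (vandermonde v).det ^ 2 = ∑ σ : Equiv.Perm (Fin n), ∑ τ : Equiv.Perm (Fin n),
      ((Equiv.Perm.sign σ : ℤ) : R) * ((Equiv.Perm.sign τ : ℤ) : R) *
        ∏ i, v i ^ ((σ i : ℕ) + τ i) := by
  have hdet : (vandermonde v).det
      = ∑ σ : Equiv.Perm (Fin n),
          ((Equiv.Perm.sign σ : ℤ) : R) * ∏ i, v i ^ (σ i : ℕ) := by
    rw [← det_transpose, det_apply']
    simp [vandermonde_apply]
  rw [hdet, sq, sum_mul_sum]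
  refine sum_congr rfl fun σ _ => sum_congr rfl fun τ _ => ?_
  simp only [pow_add, prod_mul_distrib]
  ring

end Matrix

theorem prod_filter_lt_sub_sq_eq_det_vandermonde_sq {R : Type*} [CommRing R] {n : ℕ}
    (v : Fin n → R) :
    ∏ p ∈ univ.filter (fun p : Fin n × Fin n => p.1 < p.2), (v p.1 - v p.2) ^ 2
      = (Matrix.vandermonde v).det ^ 2 := by
  rw [Matrix.det_vandermonde, ← prod_pow, prod_filter, Fintype.prod_prod_type]
  refine prod_congr rfl fun i _ => ?_
  rw [← prod_pow, ← filter_lt_eq_Ioi, prod_filter]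
  exact prod_congr rfl fun j _ => by split_ifs <;> ring

theorem integral_pow_mul_sub_pow (a b : ℕ) (k : ℝ) :
    ∫ x in (0 : ℝ)..k, x ^ a * (k - x) ^ b
      = k ^ (a + b + 1) * (a ! * b ! / (a + b + 1)! : ℝ) := by
  induction b generalizing a with
  | zero =>
    simp only [pow_zero, mul_one, integral_pow, Nat.factorial_zero, Nat.cast_one, add_zero]
    rw [Nat.factorial_succ]
    push_cast
    field_simp
    ring
  | succ b ih =>
    have hu : ∀ x ∈ Set.uIcc 0 k,
        HasDerivAt (fun x : ℝ => (k - x) ^ (b + 1)) (-((b + 1) * (k - x) ^ b)) x := fun x _ => by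
      simpa using ((hasDerivAt_id x).const_sub k).fun_pow (b + 1)
    have hv : ∀ x ∈ Set.uIcc 0 k,
        HasDerivAt (fun x : ℝ => x ^ (a + 1) / (a + 1)) (x ^ a) x := fun x _ => by
      refine ((hasDerivAt_pow (a + 1) x).div_const ((a : ℝ) + 1)).congr_deriv ?_
      rw [Nat.add_sub_cancel]
      push_cast
      field_simp
    have parts := intervalIntegral.integral_mul_deriv_eq_deriv_mul hu hv
      (by apply Continuous.intervalIntegrable; fun_prop)
      (by apply Continuous.intervalIntegrable; fun_prop)
    simp only [sub_self, zero_pow (Nat.succ_ne_zero _), zero_mul, sub_zero, zero_div,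
      mul_zero, neg_mul, intervalIntegral.integral_neg, zero_sub, neg_neg] at parts
    calc ∫ x in (0 : ℝ)..k, x ^ a * (k - x) ^ (b + 1)
        = (b + 1) / (a + 1) * ∫ x in (0 : ℝ)..k, x ^ (a + 1) * (k - x) ^ b := by
          simp_rw [mul_comm (_ ^ a), parts, ← intervalIntegral.integral_const_mul]
          congr 1 with x
          ring
      _ = _ := by
          rw [ih, show a + 1 + b + 1 = a + (b + 1) + 1 by ring]
          push_cast [Nat.factorial_succ]
          field_simp

theorem integral_fin_cons {α E : Type*} [MeasureSpace α] [SigmaFinite (volume : Measure α)]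
    [NormedAddCommGroup E] [NormedSpace ℝ E] {n : ℕ} {f : (Fin (n + 1) → α) → E}
    (hf : Integrable f) :
    ∫ l, f l = ∫ x, ∫ y, f (Fin.cons x y) := by
  have e := (volume_preserving_piFinSuccAbove (fun _ : Fin (n + 1) => α) 0).symm
  have hcons : ∀ z : α × (Fin n → α),
      (MeasurableEquiv.piFinSuccAbove (fun _ => α) 0).symm z = Fin.cons z.1 z.2 := fun z => by
    rw [MeasurableEquiv.piFinSuccAbove_symm_apply]; exact Fin.insertNth_zero' z.1 z.2
  have hf' := (e.integrable_comp_emb (MeasurableEquiv.measurableEmbedding _)).2 hf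
  rw [Function.comp_def, Measure.volume_eq_prod] at hf'
  rw [← e.integral_comp', Measure.volume_eq_prod, integral_prod _ hf']
  simp only [hcons]

def openCornerSimplex (n : ℕ) (k : ℝ) : Set (Fin n → ℝ) :=
  {l | (∀ i, 0 < l i) ∧ ∑ i, l i < k}

theorem measurableSet_openCornerSimplex (n : ℕ) (k : ℝ) :
    MeasurableSet (openCornerSimplex n k) := by
  simp only [openCornerSimplex, Set.ofPred_and, Set.ofPred_forall]
  exact (MeasurableSet.iInter fun i => measurableSet_lt measurable_const
    (measurable_pi_apply i)).inter (measurableSet_lt (by fun_prop) measurable_const)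

theorem openCornerSimplex_subset_Icc (n : ℕ) (k : ℝ) :
    openCornerSimplex n k ⊆ Set.Icc 0 (fun _ => k) := fun _ ⟨hpos, hsum⟩ =>
  ⟨fun i => (hpos i).le, fun i =>
    (single_le_sum (fun j _ => (hpos j).le) (mem_univ i)).trans hsum.le⟩

theorem Continuous.integrableOn_openCornerSimplex {n : ℕ} {k : ℝ} {f : (Fin n → ℝ) → ℝ}
    (hf : Continuous f) : IntegrableOn f (openCornerSimplex n k) :=
  hf.integrableOn_Icc.mono_set (openCornerSimplex_subset_Icc n k)

theorem openCornerSimplex_zero {k : ℝ} (hk : 0 < k) : openCornerSimplex 0 k = Set.univ := by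
  ext l
  simp [openCornerSimplex, hk]

theorem cons_mem_openCornerSimplex_iff {n : ℕ} {k x : ℝ} {y : Fin n → ℝ} :
    (Fin.cons x y : Fin (n + 1) → ℝ) ∈ openCornerSimplex (n + 1) k ↔
      x ∈ Set.Ioo 0 k ∧ y ∈ openCornerSimplex n (k - x) := by
  simp only [openCornerSimplex, Set.mem_ofPred_eq, Fin.forall_fin_succ, Fin.cons_zero,
    Fin.cons_succ, Fin.sum_cons, Set.mem_Ioo]
  constructor
  · rintro ⟨⟨hx, hy⟩, hsum⟩
    have := sum_nonneg fun i (_ : i ∈ univ) => (hy i).le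
    exact ⟨⟨hx, by linarith⟩, hy, by linarith⟩
  · rintro ⟨⟨hx, -⟩, hy, hsum⟩
    exact ⟨⟨hx, hy⟩, by linarith⟩

theorem setIntegral_openCornerSimplex_succ {n : ℕ} {k : ℝ} {f : (Fin (n + 1) → ℝ) → ℝ}
    (hf : IntegrableOn f (openCornerSimplex (n + 1) k)) :
    ∫ l in openCornerSimplex (n + 1) k, f l
      = ∫ x in Set.Ioo 0 k, ∫ y in openCornerSimplex n (k - x), f (Fin.cons x y) := by
  have hS := measurableSet_openCornerSimplex (n + 1) k
  have hfiber : ∀ x, ∫ y, (openCornerSimplex (n + 1) k).indicator f (Fin.cons x y)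
      = (Set.Ioo 0 k).indicator
          (fun x => ∫ y in openCornerSimplex n (k - x), f (Fin.cons x y)) x := by
    intro x
    classical
    by_cases hx : x ∈ Set.Ioo 0 k
    · simp only [Set.indicator_of_mem hx,
        ← integral_indicator (measurableSet_openCornerSimplex n (k - x)), Set.indicator_apply,
        cons_mem_openCornerSimplex_iff, hx, true_and]
    · simp only [Set.indicator_of_notMem hx, Set.indicator_apply, cons_mem_openCornerSimplex_iff,
        hx, false_and, if_false, integral_zero]
  calc ∫ l in openCornerSimplex (n + 1) k, f l
      = ∫ l, (openCornerSimplex (n + 1) k).indicator f l := (integral_indicator hS).symm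
    _ = ∫ x, ∫ y, (openCornerSimplex (n + 1) k).indicator f (Fin.cons x y) :=
        integral_fin_cons (hf.integrable_indicator hS)
    _ = _ := by simp_rw [hfiber, integral_indicator measurableSet_Ioo]

theorem integral_openCornerSimplex_prod_pow_mul_pow (n : ℕ) {k : ℝ} (hk : 0 < k)
    (a : Fin n → ℕ) (b : ℕ) :
    ∫ l in openCornerSimplex n k, (∏ i, l i ^ a i) * (k - ∑ i, l i) ^ b
      = k ^ (n + ∑ i, a i + b) * ((∏ i, (a i)! : ℝ) * b ! / (n + ∑ i, a i + b)!) := by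
  induction n generalizing k with
  | zero =>
    rw [openCornerSimplex_zero hk, Measure.restrict_univ]
    simp [measureReal_def, volume_pi, Nat.factorial_ne_zero]
  | succ n ih =>
    set m := n + ∑ i : Fin n, a i.succ + b
    set C : ℝ := (∏ i : Fin n, (a i.succ)! : ℝ) * b ! / (m ! : ℝ)
    have hm : a 0 + m + 1 = n + 1 + ∑ i, a i + b := by
      simp only [m, Fin.sum_univ_succ]
      ring
    rw [setIntegral_openCornerSimplex_succ
      (Continuous.integrableOn_openCornerSimplex (by fun_prop))]
    calc ∫ x in Set.Ioo 0 k, ∫ y in openCornerSimplex n (k - x),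
          (∏ i, (Fin.cons x y : Fin (n + 1) → ℝ) i ^ a i) *
            (k - ∑ i, (Fin.cons x y : Fin (n + 1) → ℝ) i) ^ b
        = ∫ x in Set.Ioo 0 k, C * (x ^ a 0 * (k - x) ^ m) :=
          setIntegral_congr_fun measurableSet_Ioo fun x hx => by
            simp only [Fin.prod_univ_succ, Fin.sum_cons, Fin.cons_zero, Fin.cons_succ,
              mul_assoc, ← sub_sub]
            rw [integral_const_mul, ih (sub_pos.2 hx.2)]
            ring
      _ = C * ∫ x in (0 : ℝ)..k, x ^ a 0 * (k - x) ^ m := by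
          rw [intervalIntegral.integral_of_le hk.le, integral_Ioc_eq_integral_Ioo,
            integral_const_mul]
      _ = _ := by
          rw [integral_pow_mul_sub_pow, Fin.prod_univ_succ, hm]
          simp only [C]
          field_simp

theorem integral_openCornerSimplex_prod_snoc_pow (n : ℕ) {k : ℝ} (hk : 0 < k)
    (e : Fin (n + 1) → ℕ) :
    ∫ l in openCornerSimplex n k,
        ∏ i, (Fin.snoc l (k - ∑ i, l i) : Fin (n + 1) → ℝ) i ^ e i
      = k ^ (n + ∑ i, e i) * ((∏ i, (e i)! : ℝ) / (n + ∑ i, e i)!) := by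
  simp only [Fin.prod_univ_castSucc, Fin.snoc_castSucc, Fin.snoc_last]
  rw [integral_openCornerSimplex_prod_pow_mul_pow n hk, Fin.sum_univ_castSucc, add_assoc]

theorem integrableOn_openCornerSimplex_prod_snoc_pow (n : ℕ) (k : ℝ) (e : Fin (n + 1) → ℕ) :
    IntegrableOn (fun l => ∏ i, (Fin.snoc l (k - ∑ i, l i) : Fin (n + 1) → ℝ) i ^ e i)
      (openCornerSimplex n k) := by
  simp only [Fin.prod_univ_castSucc, Fin.snoc_castSucc, Fin.snoc_last]
  exact Continuous.integrableOn_openCornerSimplex (by fun_prop)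

theorem Equiv.Perm.sum_val_add_val {N : ℕ} (σ τ : Equiv.Perm (Fin N)) :
    ∑ i, ((σ i : ℕ) + τ i) = N * (N - 1) := by
  rw [sum_add_distrib, Equiv.sum_comp σ (fun i => (i : ℕ)),
    Equiv.sum_comp τ (fun i => (i : ℕ)), Fin.sum_univ_eq_sum_range (fun i => i),
    ← sum_range_id_mul_two, mul_two]

theorem integral_openCornerSimplex_prod_sub_sq (n : ℕ) {k : ℝ} (hk : 0 < k) :
    ∫ l in openCornerSimplex n k,
        ∏ p ∈ univ.filter (fun p : Fin (n + 1) × Fin (n + 1) => p.1 < p.2),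
          ((Fin.snoc l (k - ∑ i, l i) : Fin (n + 1) → ℝ) p.1 -
            (Fin.snoc l (k - ∑ i, l i) : Fin (n + 1) → ℝ) p.2) ^ 2
      = k ^ ((n + 1) ^ 2 - 1) / ((n + 1) ^ 2 - 1)! *
          ((n + 1)! * (∏ i : Fin (n + 1), ((i : ℕ)! : ℝ)) ^ 2) := by
  have hexp : ∀ σ τ : Equiv.Perm (Fin (n + 1)),
      n + ∑ i, ((σ i : ℕ) + τ i) = (n + 1) ^ 2 - 1 :=
    fun σ τ => by rw [Equiv.Perm.sum_val_add_val, Nat.add_sub_cancel]; ring_nf; omega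
  simp_rw [prod_filter_lt_sub_sq_eq_det_vandermonde_sq, Matrix.det_vandermonde_sq]
  rw [integral_finsetSum _ fun σ _ => integrable_finsetSum _ fun τ _ =>
    (integrableOn_openCornerSimplex_prod_snoc_pow n k _).const_mul _]
  simp_rw [integral_finsetSum _ fun τ _ =>
    (integrableOn_openCornerSimplex_prod_snoc_pow n k _).const_mul _, integral_const_mul,
    integral_openCornerSimplex_prod_snoc_pow n hk, hexp]
  have hdet := Matrix.sum_sign_mul_sign_mul_prod
    (Matrix.of fun i j : Fin (n + 1) => (((i : ℕ) + j)! : ℝ))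
  rw [Fintype.card_fin, Matrix.det_of_factorial_add] at hdet
  rw [← hdet, mul_sum]
  refine sum_congr rfl fun σ _ => ?_
  rw [mul_sum]
  refine sum_congr rfl fun τ _ => ?_
  simp only [Matrix.of_apply]
  ring

theorem Real.Gamma_natCast_eq_factorial_sub_one {m : ℕ} (hm : m ≠ 0) :
    Real.Gamma m = (m - 1)! := by
  obtain ⟨j, rfl⟩ := Nat.exists_eq_succ_of_ne_zero hm
  simpa using Real.Gamma_nat_eq_factorial j

theorem prod_Icc_Gamma_add_one_mul_Gamma_div_Gamma_two (N : ℕ) :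
    ∏ j ∈ Icc 1 N, Real.Gamma (j + 1) * Real.Gamma j / Real.Gamma 2
      = N ! * (∏ i : Fin N, ((i : ℕ)! : ℝ)) ^ 2 := by
  induction N with
  | zero => simp
  | succ N ih =>
    rw [prod_Icc_succ_top (Nat.le_add_left 1 N), ih, Fin.prod_univ_castSucc,
      Real.Gamma_nat_eq_factorial, Real.Gamma_natCast_eq_factorial_sub_one N.succ_ne_zero,
      Real.Gamma_two, Nat.succ_sub_one, Nat.factorial_succ]
    simp only [Fin.val_castSucc, Fin.val_last]
    push_cast
    ring

/-- Selberg-type integral over the simplex slice `{λ ∈ (0,∞)^N : ∑ λᵢ = k̃}`,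
realized (equivalently to the induced delta-constraint measure) by integrating over the
first `N - 1` coordinates with the last coordinate determined by the sum constraint:
`∫ ∏_{i<j}(λᵢ-λⱼ)² = (k̃^{N²-1}/Γ(N²)) ⬝ ∏_{j=1}^N Γ(j+1)Γ(j)/Γ(2)`, where `N = n+1 ≥ 1`. -/
theorem vandermonde_simplex_slice_integral (n : ℕ) (ktil : ℝ) (hk : 0 < ktil) :
    (∫ l in {l : Fin n → ℝ | (∀ i, 0 < l i) ∧ ∑ i, l i < ktil},
        ∏ p ∈ Finset.univ.filter (fun p : Fin (n + 1) × Fin (n + 1) => p.1 < p.2),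
          ((Fin.snoc l (ktil - ∑ i, l i) : Fin (n + 1) → ℝ) p.1 -
            (Fin.snoc l (ktil - ∑ i, l i) : Fin (n + 1) → ℝ) p.2) ^ 2)
      = ktil ^ ((n + 1) ^ 2 - 1) / Real.Gamma (((n + 1) ^ 2 : ℕ)) *
          ∏ j ∈ Finset.Icc 1 (n + 1),
            Real.Gamma (j + 1) * Real.Gamma j / Real.Gamma 2 := by
  rw [← openCornerSimplex, integral_openCornerSimplex_prod_sub_sq n hk,
    Real.Gamma_natCast_eq_factorial_sub_one (by positivity),
    prod_Icc_Gamma_add_one_mul_Gamma_div_Gamma_two]
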